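/- arXiv:1810.12998 — 2 statements merged into one kernel-verified Lean document; each statement's English description precedes it below -/
import Mathlib

section
/- Let k be a positive integer, X a topological space with S(2k-1)-cellularity at most κ (κ infinite), and let 𝒰 be a family of S(2k-1)-open subsets of X, each U ∈ 𝒰 equipped with a chain of open sets U_1,...,U_k with cl(U_i) ⊆ U_{i+1} and U_k = U; write U(k) = U_1. Then there exists a subfamily 𝒱 ⊆ 𝒰 with |𝒱| ≤ κ such that ⋃{U(k) : U ∈ 𝒰} ⊆ θ_{2k-1}(⋃𝒱). -/
open Cardinal Set

universe u

variable {X : Type u}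

/-- `x` is S(n)-separated from `A`. -/
def SSep [TopologicalSpace X] : ℕ → X → Set X → Prop
  | 0, x, A => x ∉ closure A
  | (n+1), x, A => ∃ U : ℕ → Set X, (∀ i ≤ n, IsOpen (U i)) ∧ x ∈ U 0 ∧
      (∀ i < n, closure (U i) ⊆ U (i+1)) ∧ closure (U n) ∩ A = ∅

/-- `X` is an S(n)-space. -/
def SSpace (n : ℕ) (X : Type u) [TopologicalSpace X] : Prop :=
  ∀ x y : X, x ≠ y → SSep n x {y}

/-- `U` is an S(2k-1)-neighborhood of `x` (for `k ≥ 1`). -/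
def SOddNhd [TopologicalSpace X] (k : ℕ) (x : X) (U : Set X) : Prop :=
  ∃ V : ℕ → Set X, (∀ i < k, IsOpen (V i)) ∧ x ∈ V 0 ∧
    (∀ i, i + 1 < k → closure (V i) ⊆ V (i+1)) ∧ V (k-1) ⊆ U

/-- `U` is an S(2k)-neighborhood of `x` (for `k ≥ 1`). -/
def SEvenNhd [TopologicalSpace X] (k : ℕ) (x : X) (U : Set X) : Prop :=
  ∃ V : ℕ → Set X, (∀ i < k, IsOpen (V i)) ∧ x ∈ V 0 ∧
    (∀ i, i + 1 < k → closure (V i) ⊆ V (i+1)) ∧ closure (V (k-1)) ⊆ U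

/-- `U` is an open S(2k-1)-neighborhood of `x`. -/
def SOpenNhd [TopologicalSpace X] (k : ℕ) (x : X) (U : Set X) : Prop :=
  IsOpen U ∧ SOddNhd k x U

/-- `U` is an S(2k-1)-open set. -/
def SOpen [TopologicalSpace X] (k : ℕ) (U : Set X) : Prop :=
  IsOpen U ∧ ∃ x, SOddNhd k x U

/-- The S(2k-1)-closure `θ_{2k-1}(A)`. -/
def thetaOdd [TopologicalSpace X] (k : ℕ) (A : Set X) : Set X :=
  {x | ∀ U : Set X, SOpenNhd k x U → (U ∩ A).Nonempty}

/-- The S(2k)-closure `θ_{2k}(A)`. -/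
def thetaEven [TopologicalSpace X] (k : ℕ) (A : Set X) : Set X :=
  {x | ∀ U : Set X, SOpenNhd k x U → (closure U ∩ A).Nonempty}

/-- `D` is S(2k-1)-discrete. -/
def SOddDiscrete [TopologicalSpace X] (k : ℕ) (D : Set X) : Prop :=
  ∀ x ∈ D, ∃ U : Set X, SOpenNhd k x U ∧ U ∩ D = {x}

/-- `D` is S(2k)-discrete. -/
def SEvenDiscrete [TopologicalSpace X] (k : ℕ) (D : Set X) : Prop :=
  ∀ x ∈ D, ∃ U : Set X, SOpenNhd k x U ∧ closure U ∩ D = {x}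

/-- The S(2k-1)-spread `s_{2k-1}(X)`. -/
noncomputable def spreadOdd (k : ℕ) (X : Type u) [TopologicalSpace X] : Cardinal :=
  (⨆ D : {D : Set X // SOddDiscrete k D}, #D.1) ⊔ Cardinal.aleph0

/-- The S(2k)-spread `s_{2k}(X)`. -/
noncomputable def spreadEven (k : ℕ) (X : Type u) [TopologicalSpace X] : Cardinal :=
  (⨆ D : {D : Set X // SEvenDiscrete k D}, #D.1) ⊔ Cardinal.aleph0

/-- The S(2k-1)-cellularity `c_{2k-1}(X)`. -/
noncomputable def cellOdd (k : ℕ) (X : Type u) [TopologicalSpace X] : Cardinal :=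
  (⨆ F : {F : Set (Set X) // (∀ U ∈ F, SOpen k U ∧ U.Nonempty) ∧
      (∀ U ∈ F, ∀ V ∈ F, U ≠ V → U ∩ V = ∅)}, #F.1) ⊔ Cardinal.aleph0

/-- The S(2k)-cellularity `c_{2k}(X)`. -/
noncomputable def cellEven (k : ℕ) (X : Type u) [TopologicalSpace X] : Cardinal :=
  (⨆ F : {F : Set (Set X) // (∀ U ∈ F, SOpen k U ∧ U.Nonempty) ∧
      (∀ U ∈ F, ∀ V ∈ F, U ≠ V → closure U ∩ closure V = ∅)}, #F.1) ⊔ Cardinal.aleph0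

/-- The S(2k-1)-character `χ_{2k-1}(X)`. -/
noncomputable def charOdd (k : ℕ) (X : Type u) [TopologicalSpace X] : Cardinal :=
  sInf {c | Cardinal.aleph0 ≤ c ∧ ∀ x : X, ∃ B : Set (Set X), #B ≤ c ∧
    (∀ U ∈ B, SOpenNhd k x U) ∧
    ∀ U : Set X, SOpenNhd k x U → ∃ V ∈ B, V ⊆ U}

/-- The S(2k)-character `χ_{2k}(X)`. -/
noncomputable def charEven (k : ℕ) (X : Type u) [TopologicalSpace X] : Cardinal :=
  sInf {c | Cardinal.aleph0 ≤ c ∧ ∀ x : X, ∃ B : Set (Set X), #B ≤ c ∧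
    (∀ V ∈ B, IsClosed V ∧ SOddNhd k x V) ∧
    ∀ W : Set X, SOpenNhd k x W → ∃ V ∈ B, V ⊆ closure W}

/-- The S(2k-1)-pseudocharacter `ψ_{2k-1}(X)`. -/
noncomputable def psiOdd (k : ℕ) (X : Type u) [TopologicalSpace X] : Cardinal :=
  sInf {c | Cardinal.aleph0 ≤ c ∧ ∀ x : X, ∃ B : Set (Set X), #B ≤ c ∧
    (∀ U ∈ B, SOpenNhd k x U) ∧ ⋂₀ B = {x}}

/-- The S(2k)-pseudocharacter `ψ_{2k}(X)`. -/
noncomputable def psiEven (k : ℕ) (X : Type u) [TopologicalSpace X] : Cardinal :=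
  sInf {c | Cardinal.aleph0 ≤ c ∧ ∀ x : X, ∃ B : Set (Set X), #B ≤ c ∧
    (∀ U ∈ B, SOpenNhd k x U) ∧ (⋂ U ∈ B, closure U) = {x}}

/-- The usual pseudocharacter `ψ(X)`. -/
noncomputable def psi (X : Type u) [TopologicalSpace X] : Cardinal :=
  sInf {c | Cardinal.aleph0 ≤ c ∧ ∀ x : X, ∃ B : Set (Set X), #B ≤ c ∧
    (∀ U ∈ B, IsOpen U) ∧ ⋂₀ B = {x}}

/- Take a maximal pairwise disjoint family of nonempty S(2k-1)-open sets, each lying inside some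
`U i`; it has at most `c_{2k-1}(X) ≤ κ` members, and choosing one such `U i` above each member
gives `t`. If `x ∈ W i` and `O` is an open S(2k-1)-neighbourhood of `x`, then so is `O ∩ U i`
(intersect the two witnessing chains termwise), so by maximality it meets a member of the family,
and hence `O` meets the `U` chosen above that member. -/

theorem exists_pairwiseDisjoint_subset_forall_inter_nonempty {α : Type*} (t : Set (Set α))
    (hne : ∀ G ∈ t, G.Nonempty) :
    ∃ F ⊆ t, F.PairwiseDisjoint id ∧ ∀ G ∈ t, ∃ H ∈ F, (G ∩ H).Nonempty := by
  -- Vitali's lemma with the constant size function `δ = 0` yields a maximal disjoint subfamily.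
  obtain ⟨F, hFt, hdisj, hmeet⟩ := Vitali.exists_disjoint_subfamily_covering_enlargement id t
    (fun _ => 0) 2 one_lt_two (fun _ _ => le_rfl) 0 (fun _ _ => le_rfl) hne
  exact ⟨F, hFt, hdisj, fun G hG => (hmeet G hG).imp fun _ hH => ⟨hH.1, hH.2.1⟩⟩

section

variable [TopologicalSpace X] {k : ℕ} {x : X} {A B : Set X}

theorem zero_subset_pred_of_closure_subset_succ {V : ℕ → Set X}
    (hV : ∀ i, i + 1 < k → closure (V i) ⊆ V (i + 1)) : V 0 ⊆ V (k - 1) := by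
  suffices ∀ j, j < k → V 0 ⊆ V j by
    rcases Nat.eq_zero_or_pos k with rfl | hk
    · exact subset_rfl
    · exact this (k - 1) (Nat.sub_one_lt_of_lt hk)
  intro j hj
  induction j with
  | zero => exact subset_rfl
  | succ j ih => exact (ih (Nat.lt_of_succ_lt hj)).trans (subset_closure.trans (hV j hj))

theorem SOddNhd.mem (h : SOddNhd k x A) : x ∈ A := by
  obtain ⟨V, -, hx, hV, hVA⟩ := h
  exact hVA (zero_subset_pred_of_closure_subset_succ hV hx)

theorem SOddNhd.inter (hA : SOddNhd k x A) (hB : SOddNhd k x B) : SOddNhd k x (A ∩ B) := by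
  obtain ⟨V, hVo, hxV, hV, hVA⟩ := hA
  obtain ⟨V', hV'o, hxV', hV', hV'B⟩ := hB
  refine ⟨fun i => V i ∩ V' i, fun i hi => (hVo i hi).inter (hV'o i hi), ⟨hxV, hxV'⟩,
    fun i hi => ?_, inter_subset_inter hVA hV'B⟩
  exact (closure_inter_subset_inter_closure _ _).trans (inter_subset_inter (hV i hi) (hV' i hi))

theorem SOpenNhd.inter (hA : SOpenNhd k x A) (hB : SOpenNhd k x B) : SOpenNhd k x (A ∩ B) :=
  ⟨hA.1.inter hB.1, hA.2.inter hB.2⟩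

theorem SOpenNhd.sOpen (h : SOpenNhd k x A) : SOpen k A :=
  ⟨h.1, x, h.2⟩

theorem mk_le_cellOdd {F : Set (Set X)} (hF : ∀ G ∈ F, SOpen k G ∧ G.Nonempty)
    (hdisj : F.PairwiseDisjoint id) : #F ≤ cellOdd k X := by
  refine le_sup_left.trans' <| le_ciSup bddAbove_of_small
    (⟨F, hF, fun _ hG _ hH hne => ?_⟩ : {F : Set (Set X) // (∀ U ∈ F, SOpen k U ∧ U.Nonempty) ∧
      (∀ U ∈ F, ∀ V ∈ F, U ≠ V → U ∩ V = ∅)})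
  exact disjoint_iff_inter_eq_empty.mp (hdisj hG hH hne)

end

theorem stmt4_general (X : Type u) [TopologicalSpace X] (k : ℕ)
    (κ : Cardinal) (hc : cellOdd k X ≤ κ)
    {ι : Type u} (U W : ι → Set X)
    (hU : ∀ i : ι, IsOpen (U i) ∧ ∃ V : ℕ → Set X, (∀ j < k, IsOpen (V j)) ∧
      (∀ j, j + 1 < k → closure (V j) ⊆ V (j+1)) ∧
      V 0 = W i ∧ (W i).Nonempty ∧ V (k-1) = U i) :
    ∃ t : Set ι, #t ≤ κ ∧ (⋃ i : ι, W i) ⊆ thetaOdd k (⋃ i ∈ t, U i) := by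
  obtain ⟨F, hFT, hdisj, hmeet⟩ := exists_pairwiseDisjoint_subset_forall_inter_nonempty
    {G | (SOpen k G ∧ G.Nonempty) ∧ ∃ i, G ⊆ U i} fun _ hG => hG.1.2
  choose idx hidx using fun G : F => (hFT G.2).2
  refine ⟨range idx, ?_, iUnion_subset fun i x hx O hO => ?_⟩
  · calc #(range idx) ≤ #F := mk_range_le
      _ ≤ cellOdd k X := mk_le_cellOdd (fun G hG => (hFT hG).1) hdisj
      _ ≤ κ := hc
  have hUx : SOpenNhd k x (U i) := by
    obtain ⟨hUo, V, hVo, hV, hV0, -, hVU⟩ := hU i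
    exact ⟨hUo, V, hVo, hV0 ▸ hx, hV, hVU.le⟩
  have hOU := hO.inter hUx
  obtain ⟨G, hGF, y, ⟨hyO, -⟩, hyG⟩ :=
    hmeet (O ∩ U i) ⟨⟨hOU.sOpen, x, hOU.2.mem⟩, i, inter_subset_right⟩
  exact ⟨y, hyO, mem_biUnion (mem_range_self ⟨G, hGF⟩) (hidx _ hyG)⟩

theorem stmt4 (X : Type u) [TopologicalSpace X] (k : ℕ) (hk : 1 ≤ k)
    (κ : Cardinal) (hκ : Cardinal.aleph0 ≤ κ) (hc : cellOdd k X ≤ κ)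
    {ι : Type u} (U W : ι → Set X)
    (hU : ∀ i : ι, IsOpen (U i) ∧ ∃ V : ℕ → Set X, (∀ j < k, IsOpen (V j)) ∧
      (∀ j, j + 1 < k → closure (V j) ⊆ V (j+1)) ∧
      V 0 = W i ∧ (W i).Nonempty ∧ V (k-1) = U i) :
    ∃ t : Set ι, #t ≤ κ ∧ (⋃ i : ι, W i) ⊆ thetaOdd k (⋃ i ∈ t, U i) :=
  stmt4_general X k κ hc U W hU
end

section
/- If X is a Urysohn space, then |X| ≤ 2^{Uc(X)·k(X)}, where Uc(X) is the Urysohn cellularity and k(X) is the κ-character of X. -/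
open Cardinal Set

universe u

variable {X : Type u}

/-- The κ-character `k(X)`. -/
noncomputable def kChar (X : Type u) [TopologicalSpace X] : Cardinal :=
  sInf {c | Cardinal.aleph0 ≤ c ∧ ∀ x : X, ∃ B : Set (Set X), #B ≤ c ∧
    (∀ V ∈ B, IsClosed V ∧ V ∈ nhds x) ∧
    ∀ W ∈ nhds x, ∃ V ∈ B, V ⊆ closure W}


open Topology

/-!
Closing-off argument à la Pol–Šapirovskii, with `κ = Uc(X) · k(X)`. Fix for each `x` a family
`𝒱 x` of at most `κ` closed neighbourhoods witnessing `k(X)`, and build `H` with `|H| ≤ 2^κ` such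
that, for every `B ⊆ H` with `|B| ≤ κ` and every family `𝒮` of at most `κ` unions of members of
`⋃ y ∈ B, 𝒱 y`, the set of points outside all θ-closures of members of `𝒮` is either empty or
meets `H`. Suppose `z ∉ H`. For `v ∈ 𝒱 z` let `D v` be a maximal disjoint family of members of
`⋃ y ∈ H, 𝒱 y` disjoint from `v`; its members are closed with nonempty interior, so
`|D v| ≤ Uc(X)`. The point `z` lies outside the θ-closure of every `⋃₀ D v` (witnessed by the
interior of `v`), hence so does some `p ∈ H`. But separating `p` from `z` by open sets with
disjoint closures yields `v ∈ 𝒱 z` for which, by maximality of `D v`, the closure of every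
neighbourhood of `p` meets `⋃₀ D v`.
-/

section SetTheory

variable {α : Type u} {κ : Cardinal.{u}}

theorem mk_iUnion_le_of_le {ι : Type u} {c : Cardinal.{u}} (hc : ℵ₀ ≤ c) {f : ι → Set α}
    (hι : #ι ≤ c) (hf : ∀ i, #(f i) ≤ c) : #(⋃ i, f i) ≤ c :=
  (mk_iUnion_le f).trans <| (mul_le_mul' hι (ciSup_le' hf)).trans (mul_eq_self hc).le

theorem mk_bounded_subset_le_two_pow (hκ : ℵ₀ ≤ κ) {s : Set α} (hs : #s ≤ 2 ^ κ) :
    #{t : Set α // t ⊆ s ∧ #t ≤ κ} ≤ 2 ^ κ :=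
  calc #{t : Set α // t ⊆ s ∧ #t ≤ κ} ≤ max #s ℵ₀ ^ κ := mk_bounded_subset_le s κ
    _ ≤ (2 ^ κ) ^ κ := power_le_power_right (max_le hs (hκ.trans (cantor κ).le))
    _ = 2 ^ κ := by rw [← power_mul, mul_eq_self hκ]

theorem exists_subset_mk_le_of_subset_biUnion {β : Type u} {A : β → Set α} {H : Set β}
    {s : Set α} (hs : s ⊆ ⋃ y ∈ H, A y) : ∃ B ⊆ H, #B ≤ #s ∧ s ⊆ ⋃ y ∈ B, A y := by
  have : ∀ a : s, ∃ y ∈ H, a.1 ∈ A y := fun a => by simpa using hs a.2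
  choose f hfH hf using this
  exact ⟨range f, range_subset_iff.2 hfH, mk_range_le,
    fun a ha => mem_biUnion (mem_range_self ⟨a, ha⟩) (hf ⟨a, ha⟩)⟩

theorem exists_maximal_pairwiseDisjoint (C : Set (Set α)) :
    ∃ D ⊆ C, D.PairwiseDisjoint id ∧ ∀ w ∈ C, w.Nonempty → ∃ w' ∈ D, (w ∩ w').Nonempty := by
  obtain ⟨D, ⟨hDC, hD⟩, hmax⟩ := zorn_subset {D | D ⊆ C ∧ D.PairwiseDisjoint id}
    fun c hc hchain => ⟨⋃₀ c, ⟨sUnion_subset fun D hD => (hc hD).1,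
      (pairwiseDisjoint_sUnion hchain.directedOn).2 fun D hD => (hc hD).2⟩,
      fun _ => subset_sUnion_of_mem⟩
  refine ⟨D, hDC, hD, fun w hwC hw => ?_⟩
  by_contra! hdisj
  have hwD : w ∈ D := hmax ⟨insert_subset hwC hDC, hD.insert fun w' hw' _ =>
    disjoint_iff_inter_eq_empty.2 (hdisj w' hw')⟩ (subset_insert w D) (mem_insert w D)
  exact hw.ne_empty (by simpa using hdisj w hwD)

noncomputable def closingOffStage (κ : Cardinal.{u}) (F : Set α → Set α) (ϑ : Type u)
    [LinearOrder ϑ] [WellFoundedLT ϑ] : ϑ → Set α :=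
  wellFounded_lt.fix fun t stage =>
    ⋃ B : {B : Set α // B ⊆ ⋃ s : Iio t, stage s s.2 ∧ #B ≤ κ}, F B

variable {F : Set α → Set α} {ϑ : Type u} [LinearOrder ϑ] [WellFoundedLT ϑ]

theorem closingOffStage_eq (t : ϑ) : closingOffStage κ F ϑ t =
    ⋃ B : {B : Set α // B ⊆ ⋃ s : Iio t, closingOffStage κ F ϑ s ∧ #B ≤ κ}, F B :=
  wellFounded_lt.fix_eq _ t

theorem mk_closingOffStage_le (hκ : ℵ₀ ≤ κ) (hF : ∀ B : Set α, #B ≤ κ → #(F B) ≤ 2 ^ κ)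
    (hϑ : #ϑ ≤ 2 ^ κ) (t : ϑ) : #(closingOffStage κ F ϑ t) ≤ 2 ^ κ := by
  have h2κ : ℵ₀ ≤ 2 ^ κ := hκ.trans (cantor κ).le
  induction t using WellFoundedLT.induction with
  | _ t ih =>
    rw [closingOffStage_eq]
    refine mk_iUnion_le_of_le h2κ (mk_bounded_subset_le_two_pow hκ ?_) fun B => hF B B.2.2
    exact mk_iUnion_le_of_le h2κ ((mk_subtype_le _).trans hϑ) fun s => ih s s.2

theorem exists_mk_le_two_pow_forall_subset (hκ : ℵ₀ ≤ κ) (F : Set α → Set α)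
    (hF : ∀ B : Set α, #B ≤ κ → #(F B) ≤ 2 ^ κ) :
    ∃ H : Set α, #H ≤ 2 ^ κ ∧ ∀ B ⊆ H, #B ≤ κ → F B ⊆ H := by
  let ϑ := (Order.succ κ).ord.ToType
  have hϑ : #ϑ ≤ 2 ^ κ := by
    rw [mk_toType, card_ord]
    exact Order.succ_le_of_lt (cantor κ)
  refine ⟨⋃ t, closingOffStage κ F ϑ t, mk_iUnion_le_of_le (hκ.trans (cantor κ).le) hϑ
    (mk_closingOffStage_le hκ hF hϑ), fun B hB hBκ => ?_⟩
  choose stage hstage using fun b : B => mem_iUnion.1 (hB b.2)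
  -- `κ⁺` is regular, so the `≤ κ` stages at which the points of `B` appear are bounded
  obtain ⟨t, ht⟩ := not_isCofinal_iff.1 fun hcof : IsCofinal (range stage) =>
      (Order.cof_le hcof).not_gt <| by
    rw [Ordinal.cof_toType, (isRegular_succ hκ).cof_ord]
    exact mk_range_le.trans_lt (hBκ.trans_lt (Order.lt_succ κ))
  have hBt : B ⊆ ⋃ s : Iio t, closingOffStage κ F ϑ s := fun b hb =>
    mem_iUnion.2 ⟨⟨_, ht _ (mem_range_self ⟨b, hb⟩)⟩, hstage ⟨b, hb⟩⟩
  intro x hx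
  exact mem_iUnion.2 ⟨t, by rw [closingOffStage_eq]; exact mem_iUnion.2 ⟨⟨B, hBt, hBκ⟩, hx⟩⟩

theorem exists_mk_le_two_pow_forall_inter_nonempty (hκ : ℵ₀ ≤ κ) (G : Set α → Set (Set α))
    (hG : ∀ B : Set α, #B ≤ κ → #(G B) ≤ 2 ^ κ) :
    ∃ H : Set α, #H ≤ 2 ^ κ ∧
      ∀ B ⊆ H, #B ≤ κ → ∀ A ∈ G B, A.Nonempty → (A ∩ H).Nonempty := by
  obtain ⟨H, hHκ, hH⟩ := exists_mk_le_two_pow_forall_subset hκ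
    (fun B => range fun A : {A // A ∈ G B ∧ A.Nonempty} => A.2.2.some)
    fun B hB => mk_range_le.trans ((mk_subtype_mono fun _ h => h.1).trans (hG B hB))
  exact ⟨H, hHκ, fun B hBH hB A hA hne =>
    ⟨hne.some, hne.some_mem, hH B hBH hB ⟨⟨A, hA, hne⟩, rfl⟩⟩⟩

end SetTheory

section Topology

variable [TopologicalSpace X] {x : X} {U A : Set X} {κ : Cardinal.{u}} {𝒱 : X → Set (Set X)}

theorem sOddNhd_one_iff : SOddNhd 1 x U ↔ U ∈ 𝓝 x := by
  refine ⟨fun ⟨V, hV, hxV, _, hVU⟩ => Filter.mem_of_superset ((hV 0 one_pos).mem_nhds hxV) hVU,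
    fun hU => ?_⟩
  obtain ⟨V, hVU, hV, hxV⟩ := mem_nhds_iff.1 hU
  exact ⟨fun _ => V, fun _ _ => hV, hxV, fun i hi => absurd hi (by omega), hVU⟩

theorem sOpenNhd_one_iff : SOpenNhd 1 x U ↔ IsOpen U ∧ x ∈ U := by
  rw [SOpenNhd, sOddNhd_one_iff]
  exact and_congr_right IsOpen.mem_nhds_iff

theorem sOpen_one_iff : SOpen 1 U ↔ IsOpen U ∧ U.Nonempty := by
  simp only [SOpen, sOddNhd_one_iff]
  exact and_congr_right fun hU => exists_congr fun _ => hU.mem_nhds_iff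

theorem mem_thetaEven_one_iff :
    x ∈ thetaEven 1 A ↔ ∀ U, IsOpen U → x ∈ U → (closure U ∩ A).Nonempty := by
  simp only [thetaEven, mem_ofPred_eq, sOpenNhd_one_iff, and_imp]

theorem notMem_thetaEven_one_of_disjoint {v : Set X} (hv : IsClosed v) (hvx : v ∈ 𝓝 x)
    (hA : Disjoint A v) : x ∉ thetaEven 1 A := fun hx => by
  obtain ⟨y, hyv, hyA⟩ := mem_thetaEven_one_iff.1 hx (interior v) isOpen_interior
    (mem_interior_iff_mem_nhds.2 hvx)
  exact disjoint_left.1 hA hyA (closure_minimal interior_subset hv hyv)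

theorem mem_thetaEven_one_sUnion {C D : Set (Set X)}
    (hD : ∀ w ∈ C, w.Nonempty → ∃ w' ∈ D, (w ∩ w').Nonempty)
    (hC : ∀ O, IsOpen O → x ∈ O → ∃ w ∈ C, w.Nonempty ∧ w ⊆ closure O) :
    x ∈ thetaEven 1 (⋃₀ D) := by
  refine mem_thetaEven_one_iff.2 fun O hO hxO => ?_
  obtain ⟨w, hwC, hw, hwO⟩ := hC O hO hxO
  obtain ⟨w', hw'D, y, hyw, hyw'⟩ := hD w hwC hw
  exact ⟨y, hwO hyw, w', hw'D, hyw'⟩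

theorem aleph0_le_cellEven (k : ℕ) : ℵ₀ ≤ cellEven k X := le_sup_right

theorem mk_le_cellEven_one {𝒰 : Set (Set X)} (h𝒰 : ∀ U ∈ 𝒰, IsOpen U ∧ U.Nonempty)
    (hdisj : 𝒰.Pairwise fun U V => Disjoint (closure U) (closure V)) :
    #𝒰 ≤ cellEven 1 X :=
  le_sup_of_le_left <| le_ciSup_of_le bddAbove_of_small
    ⟨𝒰, fun U hU => ⟨sOpen_one_iff.2 (h𝒰 U hU), (h𝒰 U hU).2⟩,
      fun _ hU _ hV hUV => disjoint_iff_inter_eq_empty.1 (hdisj hU hV hUV)⟩ le_rfl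

theorem mk_le_cellEven_one_of_isClosed {D : Set (Set X)}
    (hD : ∀ a ∈ D, IsClosed a ∧ (interior a).Nonempty) (hdisj : D.PairwiseDisjoint id) :
    #D ≤ cellEven 1 X := by
  have hinj : InjOn interior D := fun a ha b hb hab => by_contra fun hne =>
    (hD a ha).2.ne_empty <| subset_empty_iff.1 fun x hx =>
      disjoint_left.1 (hdisj ha hb hne) (interior_subset hx) (interior_subset (hab ▸ hx))
  rw [← mk_image_eq_of_injOn _ _ hinj]
  refine mk_le_cellEven_one (by rintro _ ⟨a, ha, rfl⟩; exact ⟨isOpen_interior, (hD a ha).2⟩) ?_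
  rintro _ ⟨a, ha, rfl⟩ _ ⟨b, hb, rfl⟩ hab
  exact (hdisj ha hb (ne_of_apply_ne _ hab)).mono
    (closure_minimal interior_subset (hD a ha).1) (closure_minimal interior_subset (hD b hb).1)

structure IsKBase (𝒱 : X → Set (Set X)) : Prop where
  isClosed : ∀ x, ∀ V ∈ 𝒱 x, IsClosed V
  mem_nhds : ∀ x, ∀ V ∈ 𝒱 x, V ∈ 𝓝 x
  exists_subset_closure : ∀ x, ∀ W ∈ 𝓝 x, ∃ V ∈ 𝒱 x, V ⊆ closure W

theorem aleph0_le_kChar_and_exists_isKBase :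
    ℵ₀ ≤ kChar X ∧ ∃ 𝒱 : X → Set (Set X), IsKBase 𝒱 ∧ ∀ x, #(𝒱 x) ≤ kChar X := by
  obtain ⟨hk, h𝒱⟩ : kChar X ∈ _ := csInf_mem ⟨max ℵ₀ (2 ^ #X), le_max_left _ _, fun x =>
    ⟨{V | IsClosed V ∧ V ∈ 𝓝 x}, (mk_set_le _).trans (mk_set.trans_le (le_max_right _ _)),
      fun _ hV => hV, fun W hW => ⟨closure W,
        ⟨isClosed_closure, Filter.mem_of_superset hW subset_closure⟩, subset_rfl⟩⟩⟩
  choose 𝒱 h𝒱κ h𝒱nhds h𝒱cl using h𝒱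
  exact ⟨hk, 𝒱, ⟨fun x V hV => (h𝒱nhds x V hV).1, fun x V hV => (h𝒱nhds x V hV).2, h𝒱cl⟩, h𝒱κ⟩

theorem T25Space.of_exists_isOpen_closure_inter_eq_empty
    (h : ∀ x y : X, x ≠ y → ∃ U V : Set X, IsOpen U ∧ IsOpen V ∧ x ∈ U ∧ y ∈ V ∧
      closure U ∩ closure V = ∅) : T25Space X where
  t2_5 x y hxy := by
    obtain ⟨U, V, hU, hV, hxU, hyV, hUV⟩ := h x y hxy
    exact ((nhds_basis_opens x).lift'_closure.disjoint_iff (nhds_basis_opens y).lift'_closure).2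
      ⟨U, ⟨hxU, hU⟩, V, ⟨hyV, hV⟩, disjoint_iff_inter_eq_empty.2 hUV⟩

theorem mem_of_forall_exists_notMem_thetaEven [T25Space X] (hκ : ℵ₀ ≤ κ)
    (hc : cellEven 1 X ≤ κ) (h𝒱 : IsKBase 𝒱) (h𝒱κ : ∀ x, #(𝒱 x) ≤ κ) {H : Set X}
    (hH : ∀ B ⊆ H, #B ≤ κ → ∀ 𝒮 ⊆ sUnion '' 𝒫 (⋃ y ∈ B, 𝒱 y), #𝒮 ≤ κ →
      ∀ z, (∀ S ∈ 𝒮, z ∉ thetaEven 1 S) → ∃ p ∈ H, ∀ S ∈ 𝒮, p ∉ thetaEven 1 S)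
    (z : X) : z ∈ H := by
  by_contra hz
  choose D hDC hDdisj hDmax using fun v : Set X =>
    exists_maximal_pairwiseDisjoint {w ∈ ⋃ y ∈ H, 𝒱 y | Disjoint w v}
  have hDκ : ∀ v, #(D v) ≤ κ := fun v => by
    refine (mk_le_cellEven_one_of_isClosed (fun w hw => ?_) (hDdisj v)).trans hc
    obtain ⟨y, -, hwy⟩ := mem_iUnion₂.1 (hDC v hw).1
    exact ⟨h𝒱.isClosed y w hwy, y, mem_interior_iff_mem_nhds.2 (h𝒱.mem_nhds y w hwy)⟩
  obtain ⟨B, hBH, hBκ, hDB⟩ := exists_subset_mk_le_of_subset_biUnion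
    (iUnion₂_subset fun v (_ : v ∈ 𝒱 z) w hw => (hDC v hw).1)
  have hB : #B ≤ κ := hBκ.trans <| by
    rw [biUnion_eq_iUnion]
    exact mk_iUnion_le_of_le hκ (h𝒱κ z) fun v => hDκ v
  obtain ⟨p, hpH, hp⟩ := hH B hBH hB ((fun v => ⋃₀ D v) '' 𝒱 z)
    (by rintro _ ⟨v, hv, rfl⟩; exact ⟨D v, fun w hw => hDB (mem_biUnion hv hw), rfl⟩)
    (mk_image_le.trans (h𝒱κ z)) z <| by
      rintro _ ⟨v, hv, rfl⟩
      exact notMem_thetaEven_one_of_disjoint (h𝒱.isClosed z v hv) (h𝒱.mem_nhds z v hv)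
        (disjoint_sUnion_left.2 fun w hw => (hDC v hw).2)
  obtain ⟨U, hpU, hU, W, hzW, hW, hUW⟩ :=
    exists_open_nhds_disjoint_closure fun hpz : p = z => hz (hpz ▸ hpH)
  obtain ⟨v, hv, hvW⟩ := h𝒱.exists_subset_closure z W (hW.mem_nhds hzW)
  refine hp _ ⟨v, hv, rfl⟩ (mem_thetaEven_one_sUnion (hDmax v) fun O hO hpO => ?_)
  obtain ⟨w, hw, hwO⟩ := h𝒱.exists_subset_closure p (O ∩ U) ((hO.inter hU).mem_nhds ⟨hpO, hpU⟩)
  exact ⟨w, ⟨mem_biUnion hpH hw, hUW.mono (hwO.trans (closure_mono inter_subset_right)) hvW⟩,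
    ⟨p, mem_of_mem_nhds (h𝒱.mem_nhds p w hw)⟩, hwO.trans (closure_mono inter_subset_left)⟩

theorem mk_le_two_pow_of_isKBase [T25Space X] (hκ : ℵ₀ ≤ κ) (hc : cellEven 1 X ≤ κ)
    (h𝒱 : IsKBase 𝒱) (h𝒱κ : ∀ x, #(𝒱 x) ≤ κ) : #X ≤ 2 ^ κ := by
  let G : Set X → Set (Set X) := fun B => (fun 𝒮 => (⋃ S ∈ 𝒮, thetaEven 1 S)ᶜ) ''
    {𝒮 | 𝒮 ⊆ sUnion '' 𝒫 (⋃ y ∈ B, 𝒱 y) ∧ #𝒮 ≤ κ}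
  have hG : ∀ B : Set X, #B ≤ κ → #(G B) ≤ 2 ^ κ := fun B hB => by
    refine mk_image_le.trans <| mk_bounded_subset_le_two_pow hκ <| mk_image_le.trans ?_
    rw [mk_powerset, biUnion_eq_iUnion]
    exact power_le_power_left two_ne_zero (mk_iUnion_le_of_le hκ hB fun y => h𝒱κ y)
  obtain ⟨H, hHκ, hH⟩ := exists_mk_le_two_pow_forall_inter_nonempty hκ G hG
  have hHX : ∀ z, z ∈ H := mem_of_forall_exists_notMem_thetaEven hκ hc h𝒱 h𝒱κ
    fun B hBH hB 𝒮 h𝒮 h𝒮κ z hz => by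
      obtain ⟨p, hp, hpH⟩ := hH B hBH hB _ ⟨𝒮, ⟨h𝒮, h𝒮κ⟩, rfl⟩ ⟨z, by simpa using hz⟩
      exact ⟨p, hpH, by simpa using hp⟩
  exact mk_univ.symm.trans_le ((mk_le_mk_of_subset fun z _ => hHX z).trans hHκ)

end Topology

theorem stmt8 (X : Type u) [TopologicalSpace X]
    (h : ∀ x y : X, x ≠ y → ∃ U V : Set X, IsOpen U ∧ IsOpen V ∧ x ∈ U ∧ y ∈ V ∧
      closure U ∩ closure V = ∅) :
    #X ≤ 2 ^ (cellEven 1 X * kChar X) := by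
  have : T25Space X := .of_exists_isOpen_closure_inter_eq_empty h
  obtain ⟨hk, 𝒱, h𝒱, h𝒱κ⟩ := aleph0_le_kChar_and_exists_isKBase (X := X)
  have hc := aleph0_le_cellEven 1 (X := X)
  have hc0 : cellEven 1 X ≠ 0 := (aleph0_pos.trans_le hc).ne'
  have hk0 : kChar X ≠ 0 := (aleph0_pos.trans_le hk).ne'
  exact mk_le_two_pow_of_isKBase (hc.trans (le_mul_right hk0)) (le_mul_right hk0) h𝒱
    fun x => (h𝒱κ x).trans (le_mul_left hc0)
end
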